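/- Let R₁ and R₂ be independent nonnegative real-valued random variables on a probability space such that P[Rᵢ > r] = exp(−π λᵢ r²) for all r ≥ 0, where λ₁, λ₂ > 0, and let a > 0 and D ≥ 0 be reals. Then for every x ≥ D, the conditional probability P[R₁ ≤ x | R₂ > √a · R₁ and R₁ > D] equals 1 − exp(−π (λ₁ + λ₂ a) (x² − D²)). In particular, conditional on the event {R₂ > √a·R₁, R₁ > D} (which has positive probability), R₁ has density f(x) = 2π (λ₁ + λ₂ a) x · exp(−π (λ₁ + λ₂ a) x²) / exp(−π (λ₁ + λ₂ a) D²) on (D, ∞). -/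

import Mathlib

/-!
Write `bᵢ = π λᵢ`, `c = b₁ + b₂ a` and `E_r = {√a R₁ < R₂, R₁ > r}`. The law of `R₁` has the
Rayleigh density `2 b₁ t e^(-b₁ t²)`, so by independence
`P[E_r] = ∫_r^∞ 2 b₁ t e^(-b₁ t²) e^(-b₂ a t²) dt`; the integrand is `b₁ / c` times the Rayleigh
density of parameter `c`, whence `P[E_r] = (λ₁ / (λ₁ + λ₂ a)) e^(-c r²)`. For `x ≥ D` the
conditional distribution function is `(P[E_D] - P[E_x]) / P[E_D]`.
-/

open MeasureTheory ProbabilityTheory Real Set Filter Topology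

/-- The Rayleigh density with parameter `b = 1 / (2σ²)`, extended by the same formula to `t < 0`. -/
noncomputable def rayleighPDFReal (b t : ℝ) : ℝ := 2 * b * t * exp (-b * t ^ 2)

theorem rayleighPDFReal_nonneg {b t : ℝ} (hb : 0 ≤ b) (ht : 0 ≤ t) : 0 ≤ rayleighPDFReal b t := by
  unfold rayleighPDFReal
  positivity

theorem rayleighPDFReal_nonpos {b t : ℝ} (hb : 0 ≤ b) (ht : t ≤ 0) : rayleighPDFReal b t ≤ 0 :=
  mul_nonpos_of_nonpos_of_nonneg (mul_nonpos_of_nonneg_of_nonpos (by positivity) ht)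
    (exp_pos _).le

theorem rayleighPDFReal_mul_exp_neg_mul_sq {b b' : ℝ} (h : b + b' ≠ 0) (t : ℝ) :
    rayleighPDFReal b t * exp (-b' * t ^ 2) = b / (b + b') * rayleighPDFReal (b + b') t := by
  unfold rayleighPDFReal
  rw [mul_assoc _ (exp _), ← exp_add, show -b * t ^ 2 + -b' * t ^ 2 = -(b + b') * t ^ 2 by ring]
  field_simp

@[fun_prop]
theorem continuous_rayleighPDFReal (b : ℝ) : Continuous (rayleighPDFReal b) := by
  unfold rayleighPDFReal
  fun_prop

theorem hasDerivAt_neg_exp_neg_mul_sq (b t : ℝ) :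
    HasDerivAt (fun t => -exp (-b * t ^ 2)) (rayleighPDFReal b t) t := by
  refine (((hasDerivAt_pow 2 t).const_mul (-b)).exp).fun_neg.congr_deriv ?_
  unfold rayleighPDFReal
  push_cast
  ring

theorem integrable_rayleighPDFReal {b : ℝ} (hb : 0 < b) : Integrable (rayleighPDFReal b) := by
  have h := (integrable_mul_exp_neg_mul_sq hb).const_mul (2 * b)
  simp only [← mul_assoc] at h
  exact h

theorem integral_Ioi_rayleighPDFReal {b : ℝ} (hb : 0 < b) (r : ℝ) :
    ∫ t in Ioi r, rayleighPDFReal b t = exp (-b * r ^ 2) := by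
  have hlim : Tendsto (fun t => -exp (-b * t ^ 2)) atTop (𝓝 0) := by
    simpa using (tendsto_exp_atBot.comp
      ((tendsto_pow_atTop two_ne_zero).const_mul_atTop_of_neg (neg_neg_of_pos hb))).neg
  rw [integral_Ioi_of_hasDerivAt_of_tendsto' (fun t _ => hasDerivAt_neg_exp_neg_mul_sq b t)
    (integrable_rayleighPDFReal hb).integrableOn hlim]
  ring

theorem intervalIntegral_rayleighPDFReal (b r x : ℝ) :
    ∫ t in r..x, rayleighPDFReal b t = exp (-b * r ^ 2) - exp (-b * x ^ 2) := by
  rw [intervalIntegral.integral_eq_sub_of_hasDerivAt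
    (fun t _ => hasDerivAt_neg_exp_neg_mul_sq b t)
    ((continuous_rayleighPDFReal b).intervalIntegrable _ _)]
  ring

section Probability

variable {Ω : Type*} [MeasurableSpace Ω] {μ : Measure Ω}

theorem cond_le_eq_one_sub_div {A : Set Ω} (hA : MeasurableSet A) {X : Ω → ℝ}
    (hX : Measurable X) {D x pD px : ℝ} (hDx : D ≤ x) (hpD : 0 < pD) (hpx : 0 ≤ px)
    (hμD : μ (A ∩ {ω | D < X ω}) = ENNReal.ofReal pD)
    (hμx : μ (A ∩ {ω | x < X ω}) = ENNReal.ofReal px) :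
    μ[|A ∩ {ω | D < X ω}] {ω | X ω ≤ x} = ENNReal.ofReal (1 - px / pD) := by
  have hmeas : ∀ y, MeasurableSet (A ∩ {ω | y < X ω}) :=
    fun y => hA.inter (measurableSet_lt measurable_const hX)
  have hsub : A ∩ {ω | x < X ω} ⊆ A ∩ {ω | D < X ω} := fun ω h => ⟨h.1, hDx.trans_lt h.2⟩
  have hdiff : A ∩ {ω | D < X ω} ∩ {ω | X ω ≤ x} =
      (A ∩ {ω | D < X ω}) \ (A ∩ {ω | x < X ω}) := by
    ext ω
    simp only [mem_inter_iff, Set.mem_sdiff, mem_ofPred_eq, not_and, not_lt]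
    tauto
  rw [cond_apply (hmeas D), hdiff,
    measure_sdiff hsub (hmeas x).nullMeasurableSet (hμx ▸ ENNReal.ofReal_ne_top),
    hμD, hμx, ← ENNReal.ofReal_sub _ hpx, ← ENNReal.ofReal_inv_of_pos hpD,
    ← ENNReal.ofReal_mul (by positivity)]
  congr 1
  field_simp

theorem map_eq_withDensity_rayleighPDFReal [IsProbabilityMeasure μ] {R : Ω → ℝ}
    (hR : Measurable R) {b : ℝ} (hb : 0 ≤ b)
    (hccdf : ∀ r, 0 ≤ r → μ {ω | r < R ω} = ENNReal.ofReal (exp (-b * r ^ 2))) :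
    μ.map R = volume.withDensity fun t => ENNReal.ofReal (rayleighPDFReal b t) := by
  have hdensity_zero : ∀ t ∈ Iic (0 : ℝ), ENNReal.ofReal (rayleighPDFReal b t) = 0 :=
    fun t ht => ENNReal.ofReal_eq_zero.2 (rayleighPDFReal_nonpos hb ht)
  have hcdf : ∀ x, 0 ≤ x → μ.map R (Iic x) = ENNReal.ofReal (1 - exp (-b * x ^ 2)) := by
    intro x hx
    rw [Measure.map_apply hR measurableSet_Iic, ← compl_Ioi, preimage_compl,
      prob_compl_eq_one_sub (hR measurableSet_Ioi)]
    change 1 - μ {ω | x < R ω} = _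
    rw [hccdf x hx, ← ENNReal.ofReal_one, ← ENNReal.ofReal_sub _ (exp_pos _).le]
  have hcdf_density : ∀ x, 0 ≤ x →
      volume.withDensity (fun t => ENNReal.ofReal (rayleighPDFReal b t)) (Iic x) =
        ENNReal.ofReal (1 - exp (-b * x ^ 2)) := by
    intro x hx
    rw [withDensity_apply _ measurableSet_Iic, ← Iic_union_Ioc_eq_Iic hx,
      lintegral_union measurableSet_Ioc (Iic_disjoint_Ioc le_rfl),
      setLIntegral_congr_fun measurableSet_Iic hdensity_zero, lintegral_zero, zero_add,
      ← ofReal_integral_eq_lintegral_ofReal (continuous_rayleighPDFReal b).integrableOn_Ioc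
        (ae_restrict_of_forall_mem measurableSet_Ioc fun t ht => rayleighPDFReal_nonneg hb ht.1.le),
      ← intervalIntegral.integral_of_le hx, intervalIntegral_rayleighPDFReal]
    simp
  refine Measure.ext_of_Iic _ _ fun x => ?_
  rcases le_total 0 x with hx | hx
  · rw [hcdf x hx, hcdf_density x hx]
  · have hmap : μ.map R (Iic x) = 0 :=
      measure_mono_null (Iic_subset_Iic.2 hx) (by simp [hcdf 0 le_rfl])
    rw [hmap, withDensity_apply _ measurableSet_Iic,
      setLIntegral_congr_fun measurableSet_Iic fun t ht => hdensity_zero t (ht.trans hx),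
      lintegral_zero]

theorem measure_mul_lt_and_lt_eq [IsProbabilityMeasure μ] {R₁ R₂ : Ω → ℝ}
    (hm₁ : Measurable R₁) (hm₂ : Measurable R₂) (hindep : IndepFun R₁ R₂ μ) {b₁ b₂ : ℝ}
    (hb₁ : 0 < b₁) (hb₂ : 0 ≤ b₂)
    (hccdf₁ : ∀ r, 0 ≤ r → μ {ω | r < R₁ ω} = ENNReal.ofReal (exp (-b₁ * r ^ 2)))
    (hccdf₂ : ∀ r, 0 ≤ r → μ {ω | r < R₂ ω} = ENNReal.ofReal (exp (-b₂ * r ^ 2)))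
    {s r : ℝ} (hs : 0 ≤ s) (hr : 0 ≤ r) :
    μ {ω | s * R₁ ω < R₂ ω ∧ r < R₁ ω} =
      ENNReal.ofReal (b₁ / (b₁ + b₂ * s ^ 2) * exp (-(b₁ + b₂ * s ^ 2) * r ^ 2)) := by
  set c := b₁ + b₂ * s ^ 2
  have hc : 0 < c := by positivity
  set T : Set (ℝ × ℝ) := {p | s * p.1 < p.2}
  have hT : MeasurableSet T := measurableSet_lt (by fun_prop) measurable_snd
  have hevent : {ω | s * R₁ ω < R₂ ω ∧ r < R₁ ω} =
      (fun ω => (R₁ ω, R₂ ω)) ⁻¹' (T ∩ Ioi r ×ˢ univ) := by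
    ext ω
    simp [T]
  have htail₂ : ∀ t ∈ Ioi r, μ.map R₂ (Prod.mk t ⁻¹' T) =
      ENNReal.ofReal (exp (-(b₂ * s ^ 2) * t ^ 2)) := by
    intro t ht
    have ht0 : 0 ≤ t := hr.trans ht.le
    rw [Measure.map_apply hm₂ (measurable_prodMk_left hT)]
    change μ {ω | s * t < R₂ ω} = _
    rw [hccdf₂ (s * t) (by positivity)]
    ring_nf
  have hdensity : ∀ t ∈ Ioi r,
      ENNReal.ofReal (rayleighPDFReal b₁ t) * ENNReal.ofReal (exp (-(b₂ * s ^ 2) * t ^ 2)) =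
        ENNReal.ofReal (b₁ / c * rayleighPDFReal c t) := fun t ht => by
    rw [← ENNReal.ofReal_mul (rayleighPDFReal_nonneg hb₁.le (hr.trans ht.le)),
      rayleighPDFReal_mul_exp_neg_mul_sq hc.ne']
  rw [hevent, ← Measure.map_apply (hm₁.prodMk hm₂) (hT.inter (measurableSet_Ioi.prod .univ)),
    (indepFun_iff_map_prod_eq_prod_map_map hm₁.aemeasurable hm₂.aemeasurable).1 hindep,
    ← Measure.restrict_apply hT, ← Measure.prod_restrict, Measure.restrict_univ,
    Measure.prod_apply hT, setLIntegral_congr_fun measurableSet_Ioi htail₂,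
    map_eq_withDensity_rayleighPDFReal hm₁ hb₁.le hccdf₁,
    setLIntegral_withDensity_eq_setLIntegral_mul _ (by fun_prop) (by fun_prop) measurableSet_Ioi]
  simp only [Pi.mul_apply]
  rw [setLIntegral_congr_fun measurableSet_Ioi hdensity, ← ofReal_integral_eq_lintegral_ofReal
      ((integrable_rayleighPDFReal hc).integrableOn.const_mul _)
      (ae_restrict_of_forall_mem measurableSet_Ioi fun t ht =>
        mul_nonneg (by positivity) (rayleighPDFReal_nonneg hc.le (hr.trans ht.le))),
    integral_const_mul, integral_Ioi_rayleighPDFReal hc]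

end Probability

theorem conditional_serving_distance_distribution_general {Ω : Type*} [MeasurableSpace Ω]
    (μ : Measure Ω) [IsProbabilityMeasure μ]
    (R₁ R₂ : Ω → ℝ) (hm₁ : Measurable R₁) (hm₂ : Measurable R₂)
    (hindep : IndepFun R₁ R₂ μ)
    (lam₁ lam₂ : ℝ) (hlam₁ : 0 < lam₁) (hlam₂ : 0 < lam₂)
    (hccdf₁ : ∀ r : ℝ, 0 ≤ r → μ {ω | r < R₁ ω} = ENNReal.ofReal (Real.exp (-π * lam₁ * r ^ 2)))
    (hccdf₂ : ∀ r : ℝ, 0 ≤ r → μ {ω | r < R₂ ω} = ENNReal.ofReal (Real.exp (-π * lam₂ * r ^ 2)))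
    (a D : ℝ) (ha : 0 < a) (hD : 0 ≤ D) :
    0 < μ {ω | Real.sqrt a * R₁ ω < R₂ ω ∧ D < R₁ ω} ∧
    (∀ x : ℝ, D ≤ x →
      (μ[|{ω | Real.sqrt a * R₁ ω < R₂ ω ∧ D < R₁ ω}]) {ω | R₁ ω ≤ x} =
        ENNReal.ofReal (1 - Real.exp (-π * (lam₁ + lam₂ * a) * (x ^ 2 - D ^ 2)))) ∧
    (∀ x : ℝ, D ≤ x →
      (μ[|{ω | Real.sqrt a * R₁ ω < R₂ ω ∧ D < R₁ ω}]) {ω | R₁ ω ≤ x} =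
        ENNReal.ofReal (∫ t in D..x,
          2 * π * (lam₁ + lam₂ * a) * t * Real.exp (-π * (lam₁ + lam₂ * a) * t ^ 2) /
            Real.exp (-π * (lam₁ + lam₂ * a) * D ^ 2))) := by
  set c := lam₁ + lam₂ * a
  have hevent : ∀ r, 0 ≤ r → μ {ω | √a * R₁ ω < R₂ ω ∧ r < R₁ ω} =
      ENNReal.ofReal (lam₁ / c * exp (-π * c * r ^ 2)) := by
    intro r hr
    rw [measure_mul_lt_and_lt_eq hm₁ hm₂ hindep (b₁ := π * lam₁) (b₂ := π * lam₂) (by positivity)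
      (by positivity) (by simpa only [neg_mul] using hccdf₁) (by simpa only [neg_mul] using hccdf₂)
      (sqrt_nonneg a) hr, sq_sqrt ha.le, show π * lam₁ + π * lam₂ * a = π * c by ring,
      mul_div_mul_left _ _ pi_ne_zero]
    ring_nf
  have hcond : ∀ x, D ≤ x → μ[|{ω | √a * R₁ ω < R₂ ω ∧ D < R₁ ω}] {ω | R₁ ω ≤ x} =
      ENNReal.ofReal (1 - exp (-π * c * (x ^ 2 - D ^ 2))) := by
    intro x hx
    refine (cond_le_eq_one_sub_div (measurableSet_lt (by fun_prop) hm₂) hm₁ hx (by positivity)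
      (by positivity) (hevent D hD) (hevent x (hD.trans hx))).trans ?_
    rw [mul_div_mul_left _ _ (by positivity), ← exp_sub]
    ring_nf
  refine ⟨hevent D hD ▸ ENNReal.ofReal_pos.2 (by positivity), hcond, fun x hx => ?_⟩
  have hintegral : ∫ t in D..x, 2 * π * c * t * exp (-π * c * t ^ 2) =
      exp (-π * c * D ^ 2) - exp (-π * c * x ^ 2) := by
    simpa only [rayleighPDFReal, neg_mul, mul_assoc] using intervalIntegral_rayleighPDFReal (π * c) D x
  rw [hcond x hx, intervalIntegral.integral_div, hintegral, sub_div, div_self (exp_pos _).ne',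
    ← exp_sub]
  ring_nf

/-- If `R₁, R₂` are independent nonnegative random variables with
`P[Rᵢ > r] = e^(−π λᵢ r²)` for all `r ≥ 0` (`λ₁, λ₂ > 0`), `a > 0`, `D ≥ 0`,
then the event `E = {R₂ > √a R₁ ∧ R₁ > D}` has positive probability, the conditional
probability `P[R₁ ≤ x | E]` equals `1 − e^(−π(λ₁+λ₂a)(x²−D²))` for every `x ≥ D`, and
conditional on `E` the variable `R₁` has density
`f(x) = 2π(λ₁+λ₂a) x e^(−π(λ₁+λ₂a)x²) / e^(−π(λ₁+λ₂a)D²)` on `(D, ∞)`. -/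
theorem conditional_serving_distance_distribution {Ω : Type*} [MeasurableSpace Ω]
    (μ : Measure Ω) [IsProbabilityMeasure μ]
    (R₁ R₂ : Ω → ℝ) (hm₁ : Measurable R₁) (hm₂ : Measurable R₂)
    (hpos₁ : ∀ ω, 0 ≤ R₁ ω) (hpos₂ : ∀ ω, 0 ≤ R₂ ω)
    (hindep : IndepFun R₁ R₂ μ)
    (lam₁ lam₂ : ℝ) (hlam₁ : 0 < lam₁) (hlam₂ : 0 < lam₂)
    (hccdf₁ : ∀ r : ℝ, 0 ≤ r → μ {ω | r < R₁ ω} = ENNReal.ofReal (Real.exp (-π * lam₁ * r ^ 2)))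
    (hccdf₂ : ∀ r : ℝ, 0 ≤ r → μ {ω | r < R₂ ω} = ENNReal.ofReal (Real.exp (-π * lam₂ * r ^ 2)))
    (a D : ℝ) (ha : 0 < a) (hD : 0 ≤ D) :
    0 < μ {ω | Real.sqrt a * R₁ ω < R₂ ω ∧ D < R₁ ω} ∧
    (∀ x : ℝ, D ≤ x →
      (μ[|{ω | Real.sqrt a * R₁ ω < R₂ ω ∧ D < R₁ ω}]) {ω | R₁ ω ≤ x} =
        ENNReal.ofReal (1 - Real.exp (-π * (lam₁ + lam₂ * a) * (x ^ 2 - D ^ 2)))) ∧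
    (∀ x : ℝ, D ≤ x →
      (μ[|{ω | Real.sqrt a * R₁ ω < R₂ ω ∧ D < R₁ ω}]) {ω | R₁ ω ≤ x} =
        ENNReal.ofReal (∫ t in D..x,
          2 * π * (lam₁ + lam₂ * a) * t * Real.exp (-π * (lam₁ + lam₂ * a) * t ^ 2) /
            Real.exp (-π * (lam₁ + lam₂ * a) * D ^ 2))) :=
  conditional_serving_distance_distribution_general μ R₁ R₂ hm₁ hm₂ hindep lam₁ lam₂ hlam₁ hlam₂
    hccdf₁ hccdf₂ a D ha hD
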